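/- Suppose condition (I¹_{ρ₁,ρ₂}) holds for some ρ₁, ρ₂ > 0. Then for every (u,v) ∈ K satisfying either (‖u‖ = ρ₁ and ‖v‖ ≤ ρ₂) or (‖v‖ = ρ₂ and ‖u‖ ≤ ρ₁), and for every real μ ≥ 1, one has μ·(u,v) ≠ T(u,v). -/

import Mathlib

/-!
Suppose `μ (u, v) = T (u, v)` with `‖u‖ = ρ₁`. Testing the bound on `H₁ⱼ` from `(I¹)` on pairs
`(ψ, 0)` of `K` shows that `α₁ⱼ₁` is nonnegative on the sphere `‖ψ‖ = ρ₁` of `K̃₁`. Approximating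
a step function by such `ψ` turns this into the mass inequality
`dA₁ⱼ₁([0,1] ∖ [a₁,b₁]) ≤ c₁ · dA₁ⱼ₁([a₁,b₁])`, which makes `α₁ⱼ₁` nonnegative on every bounded
function that is `≥ c₁ ‖·‖` on `[a₁,b₁]`: on `u`, on `γ₁ⱼ` and on `k₁(·, s)`. Applying `α₁ⱼ₁` to
the first equation (Fubini) and using `μ ≥ 1` gives a `2 × 2` system `x ≤ M x + R` for
`xⱼ = α₁ⱼ₁[u]`; since `D₁ > 0` it can be solved, which bounds `H₁₁` and `H₁₂`. Evaluating the
equation where `|u| = ρ₁` then gives `ρ₁ ≤ μ ρ₁ ≤ ρ₁ · (left side of (I¹)) < ρ₁`.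
-/

open MeasureTheory Set

/-- Supremum norm of `u` on `[0,1]`. -/
noncomputable def nrm (u : ℝ → ℝ) : ℝ := sSup ((fun t => |u t|) '' Icc (0:ℝ) 1)

/-- Minimum (infimum) of `u` on `[a,b]`. -/
noncomputable def minOnIcc (u : ℝ → ℝ) (a b : ℝ) : ℝ := sInf (u '' Icc a b)

/-- `i`-th component of the system operator `T`. -/
noncomputable def Tsys (k : Fin 2 → ℝ → ℝ → ℝ) (g : Fin 2 → ℝ → ℝ)
    (f : Fin 2 → ℝ → ℝ → ℝ → ℝ) (γ : Fin 2 → Fin 2 → ℝ → ℝ)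
    (H : Fin 2 → Fin 2 → (ℝ → ℝ) → (ℝ → ℝ) → ℝ)
    (i : Fin 2) (u v : ℝ → ℝ) (t : ℝ) : ℝ :=
  γ i 0 t * H i 0 u v + γ i 1 t * H i 1 u v +
    ∫ s in (0:ℝ)..1, k i t s * g i s * f i s (u s) (v s)

/-- Condition (I¹_{ρ₁,ρ₂}) for systems. -/
def CondI1sys (k : Fin 2 → ℝ → ℝ → ℝ) (g : Fin 2 → ℝ → ℝ)
    (f : Fin 2 → ℝ → ℝ → ℝ → ℝ) (γ : Fin 2 → Fin 2 → ℝ → ℝ)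
    (H : Fin 2 → Fin 2 → (ℝ → ℝ) → (ℝ → ℝ) → ℝ)
    (K : Set ((ℝ → ℝ) × (ℝ → ℝ))) (ρ : Fin 2 → ℝ) : Prop :=
  ∃ μ : Fin 2 → Fin 2 → Fin 2 → Measure ℝ,
    (∀ i j l, IsFiniteMeasure (μ i j l) ∧ μ i j l ((Icc (0:ℝ) 1)ᶜ) = 0) ∧
    (∀ i j l, (∫ t, γ i j t ∂(μ i j l)) < 1) ∧
    (∀ i : Fin 2,
      0 < (1 - ∫ t, γ i 0 t ∂(μ i 0 i)) * (1 - ∫ t, γ i 1 t ∂(μ i 1 i)) -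
        (∫ t, γ i 1 t ∂(μ i 0 i)) * (∫ t, γ i 0 t ∂(μ i 1 i))) ∧
    (∀ i j, ∀ w ∈ K,
      ((nrm w.1 = ρ 0 ∧ nrm w.2 ≤ ρ 1) ∨ (nrm w.2 = ρ 1 ∧ nrm w.1 ≤ ρ 0)) →
      H i j w.1 w.2 ≤ (∫ t, w.1 t ∂(μ i j 0)) + ∫ t, w.2 t ∂(μ i j 1)) ∧
    ∃ fb : Fin 2 → ℝ,
      (∀ i, ∀ᵐ t ∂(volume.restrict (Icc (0:ℝ) 1)),
        ∀ x ∈ Icc (-(ρ 0)) (ρ 0), ∀ y ∈ Icc (-(ρ 1)) (ρ 1), f i t x y ≤ fb i * ρ i) ∧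
      (∀ i l : Fin 2, l ≠ i →
        (let D := (1 - ∫ t, γ i 0 t ∂(μ i 0 i)) * (1 - ∫ t, γ i 1 t ∂(μ i 1 i)) -
            (∫ t, γ i 1 t ∂(μ i 0 i)) * (∫ t, γ i 0 t ∂(μ i 1 i));
        let θ1 := (1 - ∫ t, γ i 1 t ∂(μ i 1 i)) / D;
        let θ2 := (∫ t, γ i 1 t ∂(μ i 0 i)) / D;
        let θ3 := (∫ t, γ i 0 t ∂(μ i 1 i)) / D;
        let θ4 := (1 - ∫ t, γ i 0 t ∂(μ i 0 i)) / D;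
        let Qi := ρ l / ρ i * ((∫ t, γ i 0 t ∂(μ i 0 i)) * ((μ i 0 l) univ).toReal +
            (∫ t, γ i 1 t ∂(μ i 0 i)) * ((μ i 1 l) univ).toReal);
        let Si := ρ l / ρ i * ((∫ t, γ i 0 t ∂(μ i 1 i)) * ((μ i 0 l) univ).toReal +
            (∫ t, γ i 1 t ∂(μ i 1 i)) * ((μ i 1 l) univ).toReal);
        fb i * ((nrm (γ i 0) * θ1 + nrm (γ i 1) * θ3) *
              (∫ s in (0:ℝ)..1, (∫ t, k i t s ∂(μ i 0 i)) * g i s) +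
            (nrm (γ i 0) * θ2 + nrm (γ i 1) * θ4) *
              (∫ s in (0:ℝ)..1, (∫ t, k i t s ∂(μ i 1 i)) * g i s) +
            sSup ((fun t => ∫ s in (0:ℝ)..1, |k i t s| * g i s) '' Icc (0:ℝ) 1)) +
          nrm (γ i 0) * (θ1 * Qi + θ2 * Si) + nrm (γ i 1) * (θ3 * Qi + θ4 * Si) +
          ρ l / ρ i * (nrm (γ i 0) * ((μ i 0 l) univ).toReal +
            nrm (γ i 1) * ((μ i 1 l) univ).toReal) < 1))

open Function Filter Topology

section SupNorm

variable {u : ℝ → ℝ}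

lemma abs_le_nrm (hu : ContinuousOn u (Icc 0 1)) {t : ℝ} (ht : t ∈ Icc (0:ℝ) 1) :
    |u t| ≤ nrm u :=
  le_csSup (isCompact_Icc.image_of_continuousOn hu.abs).bddAbove (mem_image_of_mem _ ht)

lemma nrm_nonneg (hu : ContinuousOn u (Icc 0 1)) : 0 ≤ nrm u :=
  (abs_nonneg _).trans (abs_le_nrm hu (left_mem_Icc.2 zero_le_one))

lemma exists_abs_eq_nrm (hu : ContinuousOn u (Icc 0 1)) : ∃ t ∈ Icc (0:ℝ) 1, |u t| = nrm u :=
  (isCompact_Icc.image_of_continuousOn hu.abs).sSup_mem ((nonempty_Icc.2 zero_le_one).image _)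

lemma nrm_eq_of_abs_le {r t₀ : ℝ} (hle : ∀ t ∈ Icc (0:ℝ) 1, |u t| ≤ r) (ht₀ : t₀ ∈ Icc (0:ℝ) 1)
    (heq : |u t₀| = r) : nrm u = r :=
  le_antisymm (csSup_le ((nonempty_Icc.2 zero_le_one).image _) (forall_mem_image.2 hle))
    (heq ▸ le_csSup ⟨r, forall_mem_image.2 hle⟩ (mem_image_of_mem _ ht₀))

lemma nrm_zero : nrm 0 = 0 :=
  nrm_eq_of_abs_le (fun _ _ => by simp) (left_mem_Icc.2 zero_le_one) (by simp)

lemma minOnIcc_le {a b t : ℝ} (hu : ContinuousOn u (Icc a b)) (ht : t ∈ Icc a b) :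
    minOnIcc u a b ≤ u t :=
  csInf_le (isCompact_Icc.image_of_continuousOn hu).bddBelow (mem_image_of_mem _ ht)

lemma le_minOnIcc {a b m : ℝ} (hab : a ≤ b) (h : ∀ t ∈ Icc a b, m ≤ u t) : m ≤ minOnIcc u a b :=
  le_csInf ((nonempty_Icc.2 hab).image _) (forall_mem_image.2 h)

end SupNorm

/-- The cone `K̃ᵢ` of the paper, for `[a,b] = [aᵢ,bᵢ]` and `c = cᵢ`. -/
def minCone (a b c : ℝ) : Set (ℝ → ℝ) :=
  {u | ContinuousOn u (Icc 0 1) ∧ c * nrm u ≤ minOnIcc u a b}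

section MinCone

variable {a b c : ℝ} {u : ℝ → ℝ}

lemma zero_mem_minCone (hab : a ≤ b) : 0 ∈ minCone a b c := by
  refine ⟨continuousOn_const, ?_⟩
  rw [nrm_zero, mul_zero]
  exact le_minOnIcc hab fun _ _ => le_rfl

lemma mem_minCone_of_le {c' : ℝ} (hu : ContinuousOn u (Icc 0 1)) (hab : a ≤ b) (hcc' : c ≤ c')
    (hlow : ∀ t ∈ Icc a b, c' * nrm u ≤ u t) : u ∈ minCone a b c :=
  ⟨hu, le_minOnIcc hab fun t ht =>
    (mul_le_mul_of_nonneg_right hcc' (nrm_nonneg hu)).trans (hlow t ht)⟩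

lemma le_apply_of_mem_minCone (hu : u ∈ minCone a b c) (hab : Icc a b ⊆ Icc 0 1) {t : ℝ}
    (ht : t ∈ Icc a b) : c * nrm u ≤ u t :=
  hu.2.trans (minOnIcc_le (hu.1.mono hab) ht)

end MinCone

lemma integral_nonneg_of_mass_le {α : Type*} [MeasurableSpace α] {A : Measure α}
    [IsFiniteMeasure A] {S : Set α} (hS : MeasurableSet S) {c r : ℝ}
    (hmass : A.real Sᶜ ≤ c * A.real S) (hr : 0 ≤ r) {w : α → ℝ}
    (hw : AEStronglyMeasurable w A) (hbd : ∀ᵐ t ∂A, |w t| ≤ r)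
    (hlow : ∀ᵐ t ∂A, t ∈ S → c * r ≤ w t) : 0 ≤ ∫ t, w t ∂A := by
  have hint : Integrable w A := (integrable_const r).mono' hw hbd
  have hS_ge : c * r * A.real S ≤ ∫ t in S, w t ∂A := by
    calc c * r * A.real S = ∫ _ in S, c * r ∂A := by rw [setIntegral_const, smul_eq_mul, mul_comm]
    _ ≤ ∫ t in S, w t ∂A :=
      integral_mono_ae (integrable_const _) hint.integrableOn ((ae_restrict_iff' hS).2 hlow)
  have hSc : |∫ t in Sᶜ, w t ∂A| ≤ r * A.real Sᶜ := by
    rw [← Real.norm_eq_abs]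
    exact norm_setIntegral_le_of_norm_le_const_ae (measure_lt_top _ _) (ae_restrict_of_ae hbd)
  rw [← integral_add_compl hS hint]
  nlinarith [neg_abs_le (∫ t in Sᶜ, w t ∂A), mul_le_mul_of_nonneg_left hmass hr]

section MeasureOnUnitInterval

variable {A : Measure ℝ} [IsFiniteMeasure A]

lemma integrable_of_continuousOn (hA : ∀ᵐ t ∂A, t ∈ Icc (0:ℝ) 1) {u : ℝ → ℝ}
    (hu : ContinuousOn u (Icc 0 1)) : Integrable u A := by
  have : A.restrict (Icc 0 1) = A := Measure.restrict_eq_self_of_ae_mem hA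
  simpa only [IntegrableOn, this] using hu.integrableOn_Icc (μ := A)

lemma integral_nonneg_of_mem_minCone (hA : ∀ᵐ t ∂A, t ∈ Icc (0:ℝ) 1) {a b c : ℝ}
    (hab : Icc a b ⊆ Icc 0 1) (hmass : A.real (Icc a b)ᶜ ≤ c * A.real (Icc a b)) {u : ℝ → ℝ}
    (hu : u ∈ minCone a b c) : 0 ≤ ∫ t, u t ∂A :=
  integral_nonneg_of_mass_le measurableSet_Icc hmass (nrm_nonneg hu.1)
    (integrable_of_continuousOn hA hu.1).aestronglyMeasurable
    (hA.mono fun _ ht => abs_le_nrm hu.1 ht) (ae_of_all _ fun _ => le_apply_of_mem_minCone hu hab)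

end MeasureOnUnitInterval

lemma mass_le_of_integral_nonneg {A : Measure ℝ} [IsFiniteMeasure A]
    (hA : ∀ᵐ t ∂A, t ∈ Icc (0:ℝ) 1) {a b c ρ : ℝ} (hab : a ≤ b) (hc0 : 0 ≤ c) (hc1 : c ≤ 1)
    (hρ : 0 < ρ) (htest : ∀ ψ ∈ minCone a b c, nrm ψ = ρ → 0 ≤ ∫ t, ψ t ∂A) :
    A.real (Icc a b)ᶜ ≤ c * A.real (Icc a b) := by
  by_cases hsub : Icc (0:ℝ) 1 ⊆ Icc a b
  · have : A (Icc a b)ᶜ = 0 := measure_mono_null (compl_subset_compl.2 hsub) hA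
    rw [measureReal_def, this, ENNReal.toReal_zero]
    positivity
  obtain ⟨t₁, ht₁, ht₁ab⟩ := not_subset.1 hsub
  -- cone elements equal to `cρ` on `[a,b]` and to `-ρ` at distance `≥ 1/n` from it
  set d : ℝ → ℝ := fun t => Metric.infDist t (Icc a b)
  set ψ : ℕ → ℝ → ℝ := fun n t => ρ * (c - (1 + c) * min 1 (n * d t))
  have hψ_cont : ∀ n, Continuous (ψ n) := fun n => by fun_prop
  have hψ_abs : ∀ n t, |ψ n t| ≤ ρ := by
    intro n t
    have h0 : 0 ≤ min 1 (n * d t) :=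
      le_min zero_le_one (mul_nonneg n.cast_nonneg Metric.infDist_nonneg)
    have h1 : min 1 (n * d t) ≤ 1 := min_le_left _ _
    have h : |c - (1 + c) * min 1 (n * d t)| ≤ 1 := abs_le.2 ⟨by nlinarith, by nlinarith⟩
    simpa only [ψ, abs_mul, abs_of_pos hρ] using mul_le_of_le_one_right hρ.le h
  have hψ_in : ∀ n, ∀ t ∈ Icc a b, ψ n t = c * ρ := fun n t ht => by
    simp only [ψ, d, Metric.infDist_zero_of_mem ht, mul_zero, min_eq_right zero_le_one]; ring
  have hψ_out : ∀ t ∉ Icc a b, ∀ᶠ n in atTop, ψ n t = -ρ := by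
    intro t ht
    have hd : 0 < d t := (isClosed_Icc.notMem_iff_infDist_pos (nonempty_Icc.2 hab)).1 ht
    filter_upwards [(tendsto_natCast_atTop_atTop.atTop_mul_const hd).eventually_ge_atTop 1]
      with n hn
    simp only [ψ, min_eq_left hn]; ring
  set L : ℝ → ℝ := (Icc a b).piecewise (fun _ => c * ρ) (fun _ => -ρ)
  have hψ_lim : ∀ t, Tendsto (fun n => ψ n t) atTop (𝓝 (L t)) := by
    intro t
    by_cases ht : t ∈ Icc a b
    · simp only [L, piecewise_eq_of_mem _ _ _ ht, hψ_in _ t ht, tendsto_const_nhds]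
    · simp only [L, piecewise_eq_of_notMem _ _ _ ht]
      exact tendsto_const_nhds.congr' (EventuallyEq.symm (hψ_out t ht))
  have hψ_nonneg : ∀ᶠ n in atTop, 0 ≤ ∫ t, ψ n t ∂A := by
    filter_upwards [hψ_out t₁ ht₁ab] with n hn
    have hnrm : nrm (ψ n) = ρ :=
      nrm_eq_of_abs_le (fun t _ => hψ_abs n t) ht₁ (by rw [hn, abs_neg, abs_of_pos hρ])
    exact htest _ (mem_minCone_of_le (hψ_cont n).continuousOn hab le_rfl fun t ht => by
      rw [hnrm, hψ_in n t ht]) hnrm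
  have hL : 0 ≤ ∫ t, L t ∂A :=
    ge_of_tendsto (tendsto_integral_of_dominated_convergence (fun _ => ρ)
      (fun n => (hψ_cont n).aestronglyMeasurable) (integrable_const ρ)
      (fun n => ae_of_all _ (hψ_abs n)) (ae_of_all _ hψ_lim)) hψ_nonneg
  rw [integral_piecewise measurableSet_Icc integrableOn_const integrableOn_const,
    setIntegral_const, setIntegral_const, smul_eq_mul, smul_eq_mul] at hL
  nlinarith

lemma aestronglyMeasurable_superposition {α : Type*} [MeasurableSpace α] {μ : Measure α}
    {f : α → ℝ → ℝ → ℝ} (hf_meas : ∀ x y, Measurable fun t => f t x y)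
    (hf_cont : ∀ᵐ t ∂μ, Continuous fun p : ℝ × ℝ => f t p.1 p.2) {u v : α → ℝ}
    (hu : AEMeasurable u μ) (hv : AEMeasurable v μ) :
    AEStronglyMeasurable (fun t => f t (u t) (v t)) μ := by
  classical
  obtain ⟨N, hN, hNm, hN0⟩ := exists_measurable_superset_of_null (ae_iff.1 hf_cont)
  -- redefining `f` on the null set `N` makes it continuous in `(x, y)` for every `t`
  set F : ℝ × ℝ → α → ℝ := fun p t => if t ∈ N then 0 else f t p.1 p.2
  have hF : StronglyMeasurable (uncurry F) := by
    refine stronglyMeasurable_uncurry_of_continuous_of_stronglyMeasurable (fun t => ?_)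
      fun p => (Measurable.ite hNm measurable_const (hf_meas p.1 p.2)).stronglyMeasurable
    by_cases ht : t ∈ N
    · simp only [F, if_pos ht, continuous_const]
    · simpa only [F, if_neg ht] using not_not.1 fun h => ht (hN h)
  refine ⟨fun t => F (hu.mk u t, hv.mk v t) t,
    hF.comp_measurable ((hu.measurable_mk.prodMk hv.measurable_mk).prodMk measurable_id), ?_⟩
  filter_upwards [hu.ae_eq_mk, hv.ae_eq_mk, measure_eq_zero_iff_ae_notMem.1 hN0]
    with t hut hvt htN
  simp only [F, if_neg htN, hut, hvt]

lemma superposition_aestronglyMeasurable_nonneg_le {f : ℝ → ℝ → ℝ → ℝ}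
    (hf_meas : ∀ x y, Measurable fun t => f t x y)
    (hf_cont : ∀ᵐ t ∂(volume.restrict (Icc (0:ℝ) 1)), Continuous fun p : ℝ × ℝ => f t p.1 p.2)
    (hf_nonneg : ∀ t x y, 0 ≤ f t x y) {u v : ℝ → ℝ} {r₀ r₁ C : ℝ}
    (hfC : ∀ᵐ t ∂(volume.restrict (Icc (0:ℝ) 1)),
      ∀ x ∈ Icc (-r₀) r₀, ∀ y ∈ Icc (-r₁) r₁, f t x y ≤ C)
    (hu : ContinuousOn u (Icc 0 1)) (hv : ContinuousOn v (Icc 0 1)) (hur : nrm u ≤ r₀)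
    (hvr : nrm v ≤ r₁) :
    AEStronglyMeasurable (fun s => f s (u s) (v s)) (volume.restrict (Icc (0:ℝ) 1)) ∧
      (∀ᵐ s ∂(volume.restrict (Icc (0:ℝ) 1)), 0 ≤ f s (u s) (v s)) ∧
      ∀ᵐ s ∂(volume.restrict (Icc (0:ℝ) 1)), f s (u s) (v s) ≤ C := by
  refine ⟨aestronglyMeasurable_superposition hf_meas hf_cont (hu.aemeasurable measurableSet_Icc)
    (hv.aemeasurable measurableSet_Icc), ae_of_all _ fun s => hf_nonneg s _ _, ?_⟩
  filter_upwards [hfC, ae_restrict_mem measurableSet_Icc] with s hs hs01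
  exact hs _ (abs_le.1 ((abs_le_nrm hu hs01).trans hur)) _
    (abs_le.1 ((abs_le_nrm hv hs01).trans hvr))

lemma integrable_uncurry_of_norm_le {α β : Type*} [MeasurableSpace α] [MeasurableSpace β]
    {A : Measure α} [IsFiniteMeasure A] {ν : Measure β} [SFinite ν] {f : α → β → ℝ}
    {F : β → ℝ} (hf : AEStronglyMeasurable (uncurry f) (A.prod ν)) (hF : Integrable F ν)
    (hfF : ∀ᵐ t ∂A, ∀ᵐ s ∂ν, ‖f t s‖ ≤ F s) : Integrable (uncurry f) (A.prod ν) := by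
  refine (integrable_prod_iff hf).2 ⟨?_, ?_⟩
  · filter_upwards [hf.prodMk_left, hfF] with t ht htF using hF.mono' ht htF
  · refine (integrable_const (∫ s, F s ∂ν)).mono' hf.norm.integral_prod_right' ?_
    filter_upwards [hfF] with t ht
    rw [Real.norm_of_nonneg (integral_nonneg fun _ => norm_nonneg _)]
    exact integral_mono_of_nonneg (ae_of_all _ fun _ => norm_nonneg _) hF ht

section Kernel

variable {β : Type*} [MeasurableSpace β] {ν : Measure β} {k : ℝ → β → ℝ} {Φ g q : β → ℝ}
  {A : Measure ℝ} [IsFiniteMeasure A]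

lemma ae_integral_kernel_nonneg [SFinite ν] (hA : ∀ᵐ t ∂A, t ∈ Icc (0:ℝ) 1) {S : Set ℝ}
    (hS : MeasurableSet S) {c : ℝ} (hmass : A.real Sᶜ ≤ c * A.real S)
    (hk : Measurable (uncurry k)) (hΦ : Measurable Φ)
    (hkΦ : ∀ t ∈ Icc (0:ℝ) 1, ∀ᵐ s ∂ν, |k t s| ≤ Φ s)
    (hkc : ∀ t ∈ S, ∀ᵐ s ∂ν, c * Φ s ≤ k t s) : ∀ᵐ s ∂ν, 0 ≤ ∫ t, k t s ∂A := by
  have hP : ∀ᵐ t ∂A, ∀ᵐ s ∂ν, |k t s| ≤ Φ s ∧ (t ∈ S → c * Φ s ≤ k t s) := by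
    filter_upwards [hA] with t ht
    by_cases htS : t ∈ S
    · filter_upwards [hkΦ t ht, hkc t htS] with s h1 h2 using ⟨h1, fun _ => h2⟩
    · filter_upwards [hkΦ t ht] with s h1 using ⟨h1, fun h => absurd h htS⟩
  have hPm :
      MeasurableSet {p : ℝ × β | |k p.1 p.2| ≤ Φ p.2 ∧ (p.1 ∈ S → c * Φ p.2 ≤ k p.1 p.2)} := by
    have hΦ' : Measurable fun p : ℝ × β => Φ p.2 := hΦ.comp measurable_snd
    refine measurableSet_setOfPred.2 (Measurable.and ?_ (Measurable.imp ?_ ?_))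
    all_goals refine measurableSet_setOfPred.1 ?_
    exacts [measurableSet_le hk.abs hΦ', hS.preimage measurable_fst,
      measurableSet_le (measurable_const.mul hΦ') hk]
  filter_upwards [(Measure.ae_ae_comm hPm).1 hP, hkΦ 0 (left_mem_Icc.2 zero_le_one)]
    with s hs hs0
  exact integral_nonneg_of_mass_le hS hmass ((abs_nonneg _).trans hs0)
    hk.of_uncurry_right.aestronglyMeasurable (hs.mono fun _ h => h.1) (hs.mono fun _ h => h.2)

lemma integral_kernel_le [SFinite ν] (hA : ∀ᵐ t ∂A, t ∈ Icc (0:ℝ) 1) (hk : Measurable (uncurry k))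
    (hkΦ : ∀ t ∈ Icc (0:ℝ) 1, ∀ᵐ s ∂ν, |k t s| ≤ Φ s) (hgΦ : Integrable (fun s => g s * Φ s) ν)
    (hg : AEStronglyMeasurable g ν) (hg0 : ∀ᵐ s ∂ν, 0 ≤ g s) (hq : AEStronglyMeasurable q ν)
    (hq0 : ∀ᵐ s ∂ν, 0 ≤ q s) {C : ℝ} (hqC : ∀ᵐ s ∂ν, q s ≤ C)
    (hK0 : ∀ᵐ s ∂ν, 0 ≤ ∫ t, k t s ∂A) :
    ∫ t, ∫ s, k t s * g s * q s ∂ν ∂A ≤ C * ∫ s, (∫ t, k t s ∂A) * g s ∂ν := by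
  have hint : ∀ φ : β → ℝ, AEStronglyMeasurable φ ν → ∀ C' : ℝ, (∀ᵐ s ∂ν, |φ s| ≤ C' * g s) →
      Integrable (uncurry fun t s => k t s * φ s) (A.prod ν) := by
    intro φ hφ C' hφC'
    have hφ' := hφ.comp_quasiMeasurePreserving (Measure.quasiMeasurePreserving_snd (μ := A))
    refine integrable_uncurry_of_norm_le (F := fun s => C' * (g s * Φ s))
      (hk.aestronglyMeasurable.mul hφ') (hgΦ.const_mul C') ?_
    filter_upwards [hA] with t ht
    filter_upwards [hkΦ t ht, hφC'] with s h1 h2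
    rw [norm_mul, Real.norm_eq_abs, Real.norm_eq_abs]
    calc |k t s| * |φ s| ≤ Φ s * (C' * g s) :=
          mul_le_mul h1 h2 (abs_nonneg _) ((abs_nonneg _).trans h1)
      _ = C' * (g s * Φ s) := by ring
  have hgq := hint (fun s => g s * q s) (hg.mul hq) C <| by
    filter_upwards [hg0, hq0, hqC] with s h1 h2 h3
    rw [abs_mul, abs_of_nonneg h1, abs_of_nonneg h2, mul_comm C]
    exact mul_le_mul_of_nonneg_left h3 h1
  have hg' := hint g hg 1 <| by
    filter_upwards [hg0] with s h1 using by rw [abs_of_nonneg h1, one_mul]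
  calc ∫ t, ∫ s, k t s * g s * q s ∂ν ∂A = ∫ s, (∫ t, k t s ∂A) * (g s * q s) ∂ν := by
        simp_rw [mul_assoc, integral_integral_swap hgq, integral_mul_const]
    _ ≤ ∫ s, C * ((∫ t, k t s ∂A) * g s) ∂ν := by
        refine integral_mono_ae ?_ ((hg'.integral_prod_right).const_mul C |>.congr ?_) ?_
        · exact hgq.integral_prod_right.congr (ae_of_all _ fun s => by
            simp only [uncurry_apply_pair, integral_mul_const])
        · exact ae_of_all _ fun s => by simp only [uncurry_apply_pair, integral_mul_const]
        · filter_upwards [hK0, hg0, hqC] with s h1 h2 h3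
          linarith [mul_le_mul_of_nonneg_left h3 (mul_nonneg h1 h2)]
    _ = C * ∫ s, (∫ t, k t s ∂A) * g s ∂ν := integral_const_mul _ _

lemma abs_integral_kernel_le_sSup (hk : Measurable (uncurry k))
    (hkΦ : ∀ t ∈ Icc (0:ℝ) 1, ∀ᵐ s ∂ν, |k t s| ≤ Φ s) (hgΦ : Integrable (fun s => g s * Φ s) ν)
    (hg : AEStronglyMeasurable g ν) (hg0 : ∀ᵐ s ∂ν, 0 ≤ g s) (hq0 : ∀ᵐ s ∂ν, 0 ≤ q s) {C : ℝ}
    (hqC : ∀ᵐ s ∂ν, q s ≤ C) (hC : 0 ≤ C) {t₀ : ℝ} (ht₀ : t₀ ∈ Icc (0:ℝ) 1) :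
    |∫ s, k t₀ s * g s * q s ∂ν| ≤ C * sSup ((fun t => ∫ s, |k t s| * g s ∂ν) '' Icc 0 1) := by
  have hint : ∀ t ∈ Icc (0:ℝ) 1, Integrable (fun s => |k t s| * g s) ν := fun t ht =>
    hgΦ.mono' (hk.of_uncurry_left.aestronglyMeasurable.norm.mul hg) <| by
      filter_upwards [hkΦ t ht, hg0] with s h1 h2
      rw [Real.norm_eq_abs, abs_mul, abs_abs, abs_of_nonneg h2, mul_comm (g s)]
      exact mul_le_mul_of_nonneg_right h1 h2
  have hbdd : BddAbove ((fun t => ∫ s, |k t s| * g s ∂ν) '' Icc 0 1) :=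
    ⟨∫ s, g s * Φ s ∂ν, forall_mem_image.2 fun t ht => integral_mono_ae (hint t ht) hgΦ <| by
      filter_upwards [hkΦ t ht, hg0] with s h1 h2
      exact (mul_le_mul_of_nonneg_right h1 h2).trans_eq (mul_comm _ _)⟩
  calc |∫ s, k t₀ s * g s * q s ∂ν| ≤ ∫ s, C * (|k t₀ s| * g s) ∂ν := by
        rw [← Real.norm_eq_abs]
        refine norm_integral_le_of_norm_le ((hint t₀ ht₀).const_mul C) ?_
        filter_upwards [hg0, hq0, hqC] with s h1 h2 h3
        rw [Real.norm_eq_abs, abs_mul, abs_mul, abs_of_nonneg h1, abs_of_nonneg h2, mul_comm C]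
        exact mul_le_mul_of_nonneg_left h3 (mul_nonneg (abs_nonneg _) h1)
    _ ≤ C * sSup ((fun t => ∫ s, |k t s| * g s ∂ν) '' Icc 0 1) := by
        rw [integral_const_mul]
        exact mul_le_mul_of_nonneg_left (le_csSup hbdd (mem_image_of_mem _ ht₀)) hC

end Kernel

lemma intervalIntegral_zero_one_eq_setIntegral (f : ℝ → ℝ) :
    ∫ s in (0:ℝ)..1, f s = ∫ s in Icc (0:ℝ) 1, f s := by
  rw [intervalIntegral.integral_of_le zero_le_one, integral_Icc_eq_integral_Ioc]

lemma le_solution_of_le_two_by_two {a₀ b₀ a₁ b₁ x₀ x₁ R₀ R₁ : ℝ} (hb₀ : 0 ≤ b₀) (ha₁ : 0 ≤ a₁)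
    (ha₀ : a₀ < 1) (hb₁ : b₁ < 1) (hD : 0 < (1 - a₀) * (1 - b₁) - b₀ * a₁)
    (hx₀ : x₀ ≤ a₀ * x₀ + b₀ * x₁ + R₀) (hx₁ : x₁ ≤ a₁ * x₀ + b₁ * x₁ + R₁) :
    x₀ ≤ (1 - b₁) / ((1 - a₀) * (1 - b₁) - b₀ * a₁) * R₀ +
        b₀ / ((1 - a₀) * (1 - b₁) - b₀ * a₁) * R₁ ∧
      x₁ ≤ a₁ / ((1 - a₀) * (1 - b₁) - b₀ * a₁) * R₀ +
        (1 - a₀) / ((1 - a₀) * (1 - b₁) - b₀ * a₁) * R₁ := by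
  simp only [div_mul_eq_mul_div, ← add_div, le_div_iff₀ hD]
  constructor
  · nlinarith [mul_le_mul_of_nonneg_left hx₀ (sub_nonneg.2 hb₁.le),
      mul_le_mul_of_nonneg_left hx₁ hb₀]
  · nlinarith [mul_le_mul_of_nonneg_left hx₀ ha₁,
      mul_le_mul_of_nonneg_left hx₁ (sub_nonneg.2 ha₀.le)]

lemma false_of_estimates {x₀ x₁ h₀ h₁ a₀ b₀ a₁ b₁ N₀ N₁ B₀ B₁ κ₀ κ₁ M fb ρ ρ' μ : ℝ}
    (hx₀ : x₀ ≤ a₀ * h₀ + b₀ * h₁ + fb * ρ * κ₀) (hx₁ : x₁ ≤ a₁ * h₀ + b₁ * h₁ + fb * ρ * κ₁)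
    (hh₀ : h₀ ≤ x₀ + ρ' * B₀) (hh₁ : h₁ ≤ x₁ + ρ' * B₁)
    (hmax : μ * ρ ≤ N₀ * h₀ + N₁ * h₁ + fb * ρ * M)
    (ha₀ : 0 ≤ a₀) (hb₀ : 0 ≤ b₀) (ha₁ : 0 ≤ a₁) (hb₁ : 0 ≤ b₁) (hN₀ : 0 ≤ N₀) (hN₁ : 0 ≤ N₁)
    (ha₀1 : a₀ < 1) (hb₁1 : b₁ < 1) (hD : 0 < (1 - a₀) * (1 - b₁) - b₀ * a₁)
    (hμ : 1 ≤ μ) (hρ : 0 < ρ)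
    (hcond : let D := (1 - a₀) * (1 - b₁) - b₀ * a₁
      let θ1 := (1 - b₁) / D
      let θ2 := b₀ / D
      let θ3 := a₁ / D
      let θ4 := (1 - a₀) / D
      let Qi := ρ' / ρ * (a₀ * B₀ + b₀ * B₁)
      let Si := ρ' / ρ * (a₁ * B₀ + b₁ * B₁)
      fb * ((N₀ * θ1 + N₁ * θ3) * κ₀ + (N₀ * θ2 + N₁ * θ4) * κ₁ + M) +
        N₀ * (θ1 * Qi + θ2 * Si) + N₁ * (θ3 * Qi + θ4 * Si) + ρ' / ρ * (N₀ * B₀ + N₁ * B₁) < 1) :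
    False := by
  dsimp only at hcond
  obtain ⟨hx₀', hx₁'⟩ := le_solution_of_le_two_by_two hb₀ ha₁ ha₀1 hb₁1 hD
    (x₀ := x₀) (x₁ := x₁) (R₀ := fb * ρ * κ₀ + ρ' * (a₀ * B₀ + b₀ * B₁))
    (R₁ := fb * ρ * κ₁ + ρ' * (a₁ * B₀ + b₁ * B₁))
    (by nlinarith [mul_le_mul_of_nonneg_left hh₀ ha₀, mul_le_mul_of_nonneg_left hh₁ hb₀])
    (by nlinarith [mul_le_mul_of_nonneg_left hh₀ ha₁, mul_le_mul_of_nonneg_left hh₁ hb₁])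
  set r := ρ' / ρ with hr
  have hρ' : ρ' = ρ * r := by rw [hr]; field_simp
  set D := (1 - a₀) * (1 - b₁) - b₀ * a₁
  set θ₁ := (1 - b₁) / D
  set θ₂ := b₀ / D
  set θ₃ := a₁ / D
  set θ₄ := (1 - a₀) / D
  rw [hρ'] at hx₀' hx₁' hh₀ hh₁
  nlinarith [mul_le_mul_of_nonneg_left hh₀ hN₀, mul_le_mul_of_nonneg_left hh₁ hN₁,
    mul_le_mul_of_nonneg_left hx₀' hN₀, mul_le_mul_of_nonneg_left hx₁' hN₁,
    mul_lt_mul_of_pos_left hcond hρ, mul_le_mul_of_nonneg_right hμ hρ.le]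

structure IsAdmissibleKernel (k : ℝ → ℝ → ℝ) (g Φ : ℝ → ℝ) (a b c : ℝ) : Prop where
  measurable_uncurry : Measurable (uncurry k)
  measurable_majorant : Measurable Φ
  measurable_weight : Measurable g
  weight_nonneg : ∀ᵐ s ∂(volume.restrict (Icc (0:ℝ) 1)), 0 ≤ g s
  integrableOn_mul : IntegrableOn (fun s => g s * Φ s) (Icc (0:ℝ) 1)
  abs_le : ∀ t ∈ Icc (0:ℝ) 1, ∀ᵐ s ∂(volume.restrict (Icc (0:ℝ) 1)), |k t s| ≤ Φ s
  le_of_mem : ∀ t ∈ Icc a b, ∀ᵐ s ∂(volume.restrict (Icc (0:ℝ) 1)), c * Φ s ≤ k t s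

lemma IsAdmissibleKernel.of_le {k : ℝ → ℝ → ℝ} {g Φ : ℝ → ℝ} {a b c c' : ℝ}
    (hk : IsAdmissibleKernel k g Φ a b c') (hc : c ≤ c') : IsAdmissibleKernel k g Φ a b c where
  __ := hk
  le_of_mem t ht := by
    filter_upwards [hk.le_of_mem t ht, hk.abs_le 0 (left_mem_Icc.2 zero_le_one)] with s h1 h2
    exact (mul_le_mul_of_nonneg_right hc ((abs_nonneg _).trans h2)).trans h1

section Eigen

variable {k : ℝ → ℝ → ℝ} {g Φ q u : ℝ → ℝ} {γ : Fin 2 → ℝ → ℝ} {h : Fin 2 → ℝ}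
  {a b c μ C : ℝ}

lemma integral_le_of_eigen_eq (hk : IsAdmissibleKernel k g Φ a b c) {A : Measure ℝ}
    [IsFiniteMeasure A] (hA : ∀ᵐ t ∂A, t ∈ Icc (0:ℝ) 1) (hab : Icc a b ⊆ Icc 0 1)
    (hmass : A.real (Icc a b)ᶜ ≤ c * A.real (Icc a b))
    (hq : AEStronglyMeasurable q (volume.restrict (Icc (0:ℝ) 1)))
    (hq0 : ∀ᵐ s ∂(volume.restrict (Icc (0:ℝ) 1)), 0 ≤ q s)
    (hqC : ∀ᵐ s ∂(volume.restrict (Icc (0:ℝ) 1)), q s ≤ C)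
    (hu : u ∈ minCone a b c) (hγ : ∀ j, ContinuousOn (γ j) (Icc 0 1)) (hμ : 1 ≤ μ)
    (heq : ∀ t ∈ Icc (0:ℝ) 1,
      μ * u t = γ 0 t * h 0 + γ 1 t * h 1 + ∫ s in Icc (0:ℝ) 1, k t s * g s * q s) :
    ∫ t, u t ∂A ≤ (∫ t, γ 0 t ∂A) * h 0 + (∫ t, γ 1 t ∂A) * h 1 +
      C * ∫ s in Icc (0:ℝ) 1, (∫ t, k t s ∂A) * g s := by
  have hγ' : ∀ j, Integrable (fun t => γ j t * h j) A :=
    fun j => (integrable_of_continuousOn hA (hγ j)).mul_const _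
  have hγh : Integrable (fun t => γ 0 t * h 0 + γ 1 t * h 1) A := (hγ' 0).add (hγ' 1)
  have hF : ∫ t, (∫ s in Icc (0:ℝ) 1, k t s * g s * q s) ∂A =
      μ * ∫ t, u t ∂A - ((∫ t, γ 0 t ∂A) * h 0 + (∫ t, γ 1 t ∂A) * h 1) := by
    rw [integral_congr_ae (hA.mono fun t ht => show _ = μ * u t - (γ 0 t * h 0 + γ 1 t * h 1)
        by rw [heq t ht]; ring),
      integral_sub ((integrable_of_continuousOn hA hu.1).const_mul μ) hγh,
      integral_const_mul, integral_add (hγ' 0) (hγ' 1), integral_mul_const, integral_mul_const]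
  have hle := integral_kernel_le hA hk.measurable_uncurry hk.abs_le hk.integrableOn_mul
    hk.measurable_weight.aestronglyMeasurable hk.weight_nonneg hq hq0 hqC
    (ae_integral_kernel_nonneg hA measurableSet_Icc hmass hk.measurable_uncurry
      hk.measurable_majorant hk.abs_le hk.le_of_mem)
  nlinarith [mul_le_mul_of_nonneg_right hμ (integral_nonneg_of_mem_minCone hA hab hmass hu)]

lemma mul_nrm_le_of_eigen_eq (hk : IsAdmissibleKernel k g Φ a b c)
    (hq0 : ∀ᵐ s ∂(volume.restrict (Icc (0:ℝ) 1)), 0 ≤ q s)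
    (hqC : ∀ᵐ s ∂(volume.restrict (Icc (0:ℝ) 1)), q s ≤ C) (hC : 0 ≤ C)
    (hu : ContinuousOn u (Icc 0 1)) (hγ : ∀ j, ContinuousOn (γ j) (Icc 0 1)) (hh : ∀ j, 0 ≤ h j)
    (hμ : 0 ≤ μ) (heq : ∀ t ∈ Icc (0:ℝ) 1,
      μ * u t = γ 0 t * h 0 + γ 1 t * h 1 + ∫ s in Icc (0:ℝ) 1, k t s * g s * q s) :
    μ * nrm u ≤ nrm (γ 0) * h 0 + nrm (γ 1) * h 1 +
      C * sSup ((fun t => ∫ s in Icc (0:ℝ) 1, |k t s| * g s) '' Icc (0:ℝ) 1) := by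
  obtain ⟨t₀, ht₀, hut₀⟩ := exists_abs_eq_nrm hu
  have hF := abs_integral_kernel_le_sSup hk.measurable_uncurry hk.abs_le
    hk.integrableOn_mul hk.measurable_weight.aestronglyMeasurable hk.weight_nonneg hq0
    hqC hC ht₀
  have h₀ := mul_le_mul_of_nonneg_right (abs_le_nrm (hγ 0) ht₀) (hh 0)
  have h₁ := mul_le_mul_of_nonneg_right (abs_le_nrm (hγ 1) ht₀) (hh 1)
  calc μ * nrm u = |γ 0 t₀ * h 0 + γ 1 t₀ * h 1 + ∫ s in Icc (0:ℝ) 1, k t₀ s * g s * q s| := by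
        rw [← heq t₀ ht₀, abs_mul, hut₀, abs_of_nonneg hμ]
    _ ≤ |γ 0 t₀| * h 0 + |γ 1 t₀| * h 1 + |∫ s in Icc (0:ℝ) 1, k t₀ s * g s * q s| := by
        refine (abs_add_le _ _).trans (add_le_add_left ((abs_add_le _ _).trans ?_) _)
        rw [abs_mul, abs_mul, abs_of_nonneg (hh 0), abs_of_nonneg (hh 1)]
    _ ≤ _ := by linarith

theorem false_of_eigen_component {v : ℝ → ℝ} {A B : Fin 2 → Measure ℝ}
    [∀ j, IsFiniteMeasure (A j)] [∀ j, IsFiniteMeasure (B j)] {ρ ρ' fb : ℝ}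
    (hk : IsAdmissibleKernel k g Φ a b c)
    (hA : ∀ j, ∀ᵐ t ∂A j, t ∈ Icc (0:ℝ) 1) (hB : ∀ j, ∀ᵐ t ∂B j, t ∈ Icc (0:ℝ) 1)
    (hab : Icc a b ⊆ Icc 0 1) (hmass : ∀ j, (A j).real (Icc a b)ᶜ ≤ c * (A j).real (Icc a b))
    (hq : AEStronglyMeasurable q (volume.restrict (Icc (0:ℝ) 1)))
    (hq0 : ∀ᵐ s ∂(volume.restrict (Icc (0:ℝ) 1)), 0 ≤ q s)
    (hqfb : ∀ᵐ s ∂(volume.restrict (Icc (0:ℝ) 1)), q s ≤ fb * ρ)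
    (hu : u ∈ minCone a b c) (hu_nrm : nrm u = ρ) (hv : ∀ t ∈ Icc (0:ℝ) 1, |v t| ≤ ρ')
    (hγ : ∀ j, γ j ∈ minCone a b c) (hh0 : ∀ j, 0 ≤ h j)
    (hh : ∀ j, h j ≤ (∫ t, u t ∂A j) + ∫ t, v t ∂B j) (hμ : 1 ≤ μ) (hρ : 0 < ρ)
    (heq : ∀ t ∈ Icc (0:ℝ) 1,
      μ * u t = γ 0 t * h 0 + γ 1 t * h 1 + ∫ s in (0:ℝ)..1, k t s * g s * q s)
    (hlt₀ : ∫ t, γ 0 t ∂A 0 < 1) (hlt₁ : ∫ t, γ 1 t ∂A 1 < 1)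
    (hD : 0 < (1 - ∫ t, γ 0 t ∂A 0) * (1 - ∫ t, γ 1 t ∂A 1) -
      (∫ t, γ 1 t ∂A 0) * ∫ t, γ 0 t ∂A 1)
    (hcond : let D := (1 - ∫ t, γ 0 t ∂A 0) * (1 - ∫ t, γ 1 t ∂A 1) -
          (∫ t, γ 1 t ∂A 0) * ∫ t, γ 0 t ∂A 1
      let θ1 := (1 - ∫ t, γ 1 t ∂A 1) / D
      let θ2 := (∫ t, γ 1 t ∂A 0) / D
      let θ3 := (∫ t, γ 0 t ∂A 1) / D
      let θ4 := (1 - ∫ t, γ 0 t ∂A 0) / D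
      let Qi := ρ' / ρ * ((∫ t, γ 0 t ∂A 0) * (B 0 univ).toReal +
          (∫ t, γ 1 t ∂A 0) * (B 1 univ).toReal)
      let Si := ρ' / ρ * ((∫ t, γ 0 t ∂A 1) * (B 0 univ).toReal +
          (∫ t, γ 1 t ∂A 1) * (B 1 univ).toReal)
      fb * ((nrm (γ 0) * θ1 + nrm (γ 1) * θ3) * (∫ s in (0:ℝ)..1, (∫ t, k t s ∂A 0) * g s) +
          (nrm (γ 0) * θ2 + nrm (γ 1) * θ4) * (∫ s in (0:ℝ)..1, (∫ t, k t s ∂A 1) * g s) +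
          sSup ((fun t => ∫ s in (0:ℝ)..1, |k t s| * g s) '' Icc (0:ℝ) 1)) +
        nrm (γ 0) * (θ1 * Qi + θ2 * Si) + nrm (γ 1) * (θ3 * Qi + θ4 * Si) +
        ρ' / ρ * (nrm (γ 0) * (B 0 univ).toReal + nrm (γ 1) * (B 1 univ).toReal) < 1) :
    False := by
  simp only [intervalIntegral_zero_one_eq_setIntegral] at heq hcond
  have hC : 0 ≤ fb * ρ := by
    have : (ae (volume.restrict (Icc (0:ℝ) 1))).NeBot := ae_neBot.2 <| by
      rw [Ne, Measure.restrict_eq_zero, Real.volume_Icc]; norm_num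
    obtain ⟨s, h0, h1⟩ := (hq0.and hqfb).exists
    exact h0.trans h1
  have hx : ∀ j, _ := fun j => integral_le_of_eigen_eq hk (hA j) hab (hmass j) hq hq0 hqfb hu
    (fun j => (hγ j).1) hμ heq
  have hv_le : ∀ j, ∫ t, v t ∂B j ≤ ρ' * (B j univ).toReal := fun j => by
    have := norm_integral_le_of_norm_le_const (μ := B j) (f := v) ((hB j).mono hv)
    rw [Real.norm_eq_abs, measureReal_def] at this
    exact (le_abs_self _).trans this
  have hα : ∀ j m, 0 ≤ ∫ t, γ m t ∂A j :=
    fun j m => integral_nonneg_of_mem_minCone (hA j) hab (hmass j) (hγ m)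
  have hmax := mul_nrm_le_of_eigen_eq hk hq0 hqfb hC hu.1 (fun j => (hγ j).1) hh0
    (zero_le_one.trans hμ) heq
  rw [hu_nrm] at hmax
  exact false_of_estimates (hx 0) (hx 1) ((hh 0).trans (add_le_add_right (hv_le 0) _))
    ((hh 1).trans (add_le_add_right (hv_le 1) _)) hmax (hα 0 0) (hα 0 1) (hα 1 0) (hα 1 1)
    (nrm_nonneg (hγ 0).1) (nrm_nonneg (hγ 1).1) hlt₀ hlt₁ hD hμ hρ hcond

end Eigen

lemma integral_nonneg_of_H_le {H : Fin 2 → Fin 2 → (ℝ → ℝ) → (ℝ → ℝ) → ℝ}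
    {μm : Fin 2 → Fin 2 → Fin 2 → Measure ℝ} {a b c ρ : Fin 2 → ℝ}
    {K : Set ((ℝ → ℝ) × (ℝ → ℝ))}
    (hK : K = {w | w.1 ∈ minCone (a 0) (b 0) (c 0) ∧ w.2 ∈ minCone (a 1) (b 1) (c 1)})
    (hab : ∀ i, a i ≤ b i) (hρ : ∀ i, 0 < ρ i) (hH_nonneg : ∀ i j, ∀ w ∈ K, 0 ≤ H i j w.1 w.2)
    (hHle : ∀ i j, ∀ w ∈ K, ((nrm w.1 = ρ 0 ∧ nrm w.2 ≤ ρ 1) ∨ (nrm w.2 = ρ 1 ∧ nrm w.1 ≤ ρ 0)) →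
      H i j w.1 w.2 ≤ (∫ t, w.1 t ∂(μm i j 0)) + ∫ t, w.2 t ∂(μm i j 1)) :
    ∀ i j, ∀ ψ ∈ minCone (a i) (b i) (c i), nrm ψ = ρ i → 0 ≤ ∫ t, ψ t ∂μm i j i := by
  have h0 : ∀ l, (0 : ℝ → ℝ) ∈ minCone (a l) (b l) (c l) := fun l => zero_mem_minCone (hab l)
  refine Fin.forall_fin_two.2 ⟨fun j ψ hψ hnψ => ?_, fun j ψ hψ hnψ => ?_⟩
  · have hw : ((ψ, 0) : (ℝ → ℝ) × (ℝ → ℝ)) ∈ K := hK ▸ ⟨hψ, h0 1⟩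
    have hle := hHle 0 j _ hw (Or.inl ⟨hnψ, nrm_zero ▸ (hρ 1).le⟩)
    simp only [Pi.zero_apply, integral_zero, add_zero] at hle
    exact (hH_nonneg 0 j _ hw).trans hle
  · have hw : ((0, ψ) : (ℝ → ℝ) × (ℝ → ℝ)) ∈ K := hK ▸ ⟨h0 0, hψ⟩
    have hle := hHle 1 j _ hw (Or.inr ⟨hnψ, nrm_zero ▸ (hρ 0).le⟩)
    simp only [Pi.zero_apply, integral_zero, zero_add] at hle
    exact (hH_nonneg 1 j _ hw).trans hle

theorem stmt11_general
    (k : Fin 2 → ℝ → ℝ → ℝ) (g : Fin 2 → ℝ → ℝ) (f : Fin 2 → ℝ → ℝ → ℝ → ℝ)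
    (γ : Fin 2 → Fin 2 → ℝ → ℝ) (H : Fin 2 → Fin 2 → (ℝ → ℝ) → (ℝ → ℝ) → ℝ)
    (a b : Fin 2 → ℝ) (Φ : Fin 2 → ℝ → ℝ) (ct : Fin 2 → ℝ) (cγ : Fin 2 → Fin 2 → ℝ)
    (c : Fin 2 → ℝ) (K : Set ((ℝ → ℝ) × (ℝ → ℝ)))
    (hf_meas : ∀ i (x y : ℝ), Measurable (fun t => f i t x y))
    (hf_cont : ∀ i, ∀ᵐ t ∂(volume.restrict (Icc (0:ℝ) 1)),
      Continuous (fun p : ℝ × ℝ => f i t p.1 p.2))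
    (hf_nonneg : ∀ i t x y, 0 ≤ f i t x y)
    (hk_meas : ∀ i, Measurable (Function.uncurry (k i)))
    (hab : ∀ i, 0 ≤ a i ∧ a i ≤ b i ∧ b i ≤ 1)
    (hΦ_meas : ∀ i, Measurable (Φ i))
    (hct : ∀ i, ct i ∈ Ioc (0:ℝ) 1)
    (hkΦ_abs : ∀ i, ∀ t ∈ Icc (0:ℝ) 1, ∀ᵐ s ∂(volume.restrict (Icc (0:ℝ) 1)),
      |k i t s| ≤ Φ i s)
    (hkΦ_low : ∀ i, ∀ t ∈ Icc (a i) (b i), ∀ᵐ s ∂(volume.restrict (Icc (0:ℝ) 1)),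
      ct i * Φ i s ≤ k i t s)
    (hg_meas : ∀ i, Measurable (g i))
    (hg_nonneg : ∀ i, ∀ᵐ s ∂(volume.restrict (Icc (0:ℝ) 1)), 0 ≤ g i s)
    (hgΦ_int : ∀ i, IntegrableOn (fun s => g i s * Φ i s) (Icc (0:ℝ) 1))
    (hγ_cont : ∀ i j, ContinuousOn (γ i j) (Icc (0:ℝ) 1))
    (hcγ : ∀ i j, cγ i j ∈ Ioc (0:ℝ) 1)
    (hγ_low : ∀ i j, ∀ t ∈ Icc (a i) (b i), cγ i j * nrm (γ i j) ≤ γ i j t)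
    (hc : ∀ i, c i = min (ct i) (min (cγ i 0) (cγ i 1)))
    (hK : K = {w : (ℝ → ℝ) × (ℝ → ℝ) |
      (ContinuousOn w.1 (Icc (0:ℝ) 1) ∧ c 0 * nrm w.1 ≤ minOnIcc w.1 (a 0) (b 0)) ∧
      (ContinuousOn w.2 (Icc (0:ℝ) 1) ∧ c 1 * nrm w.2 ≤ minOnIcc w.2 (a 1) (b 1))})
    (hH_nonneg : ∀ i j, ∀ w ∈ K, 0 ≤ H i j w.1 w.2)
    (ρ : Fin 2 → ℝ) (hρ : ∀ i, 0 < ρ i) (hI1 : CondI1sys k g f γ H K ρ) :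
    ∀ w ∈ K, ((nrm w.1 = ρ 0 ∧ nrm w.2 ≤ ρ 1) ∨ (nrm w.2 = ρ 1 ∧ nrm w.1 ≤ ρ 0)) →
      ∀ μc : ℝ, 1 ≤ μc →
      ¬ (∀ t ∈ Icc (0:ℝ) 1, μc * w.1 t = Tsys k g f γ H 0 w.1 w.2 t ∧
        μc * w.2 t = Tsys k g f γ H 1 w.1 w.2 t) := by
  intro w hw hbdry μc hμc hEq
  obtain ⟨μm, hμm, hγlt, hD, hHle, fb, hfb, hcond⟩ := hI1
  have hfin : ∀ i j l, IsFiniteMeasure (μm i j l) := fun i j l => (hμm i j l).1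
  have hμ01 : ∀ i j l, ∀ᵐ t ∂μm i j l, t ∈ Icc (0:ℝ) 1 := fun i j l => (hμm i j l).2
  have hc' : ∀ i, 0 ≤ c i ∧ c i ≤ ct i ∧ ∀ j, c i ≤ cγ i j := fun i => by
    simp [hc i, Fin.forall_fin_two, (hct i).1.le, (hcγ i 0).1.le, (hcγ i 1).1.le]
  have hmass : ∀ i j,
      (μm i j i).real (Icc (a i) (b i))ᶜ ≤ c i * (μm i j i).real (Icc (a i) (b i)) :=
    fun i j => mass_le_of_integral_nonneg (hμ01 i j i) (hab i).2.1 (hc' i).1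
      ((hc' i).2.1.trans (hct i).2) (hρ i)
      (integral_nonneg_of_H_le hK (fun i => (hab i).2.1) hρ hH_nonneg hHle i j)
  have hkern : ∀ i, IsAdmissibleKernel (k i) (g i) (Φ i) (a i) (b i) (c i) := fun i =>
    IsAdmissibleKernel.of_le ⟨hk_meas i, hΦ_meas i, hg_meas i, hg_nonneg i, hgΦ_int i,
      hkΦ_abs i, hkΦ_low i⟩ (hc' i).2.1
  have hγK : ∀ i j, γ i j ∈ minCone (a i) (b i) (c i) := fun i j =>
    mem_minCone_of_le (hγ_cont i j) (hab i).2.1 ((hc' i).2.2 j) (hγ_low i j)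
  have hab' : ∀ i, Icc (a i) (b i) ⊆ Icc 0 1 := fun i => Icc_subset_Icc (hab i).1 (hab i).2.2
  have hH := fun i j => hHle i j w hw hbdry
  obtain ⟨hw₁, hw₂⟩ : w.1 ∈ minCone (a 0) (b 0) (c 0) ∧ w.2 ∈ minCone (a 1) (b 1) (c 1) := by
    rwa [hK] at hw
  have hwρ : nrm w.1 ≤ ρ 0 ∧ nrm w.2 ≤ ρ 1 := by
    rcases hbdry with ⟨h₁, h₂⟩ | ⟨h₂, h₁⟩ <;> exact ⟨by linarith, by linarith⟩
  have hq := fun i => superposition_aestronglyMeasurable_nonneg_le (hf_meas i) (hf_cont i)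
    (hf_nonneg i) (hfb i) hw₁.1 hw₂.1 hwρ.1 hwρ.2
  rcases hbdry with ⟨h₁, -⟩ | ⟨h₁, -⟩
  · exact false_of_eigen_component (hkern 0) (hμ01 0 · 0) (hμ01 0 · 1) (hab' 0) (hmass 0)
      (hq 0).1 (hq 0).2.1 (hq 0).2.2 hw₁ h₁ (fun t ht => (abs_le_nrm hw₂.1 ht).trans hwρ.2)
      (hγK 0) (fun j => hH_nonneg 0 j w hw) (hH 0) hμc (hρ 0) (fun t ht => (hEq t ht).1)
      (hγlt 0 0 0) (hγlt 0 1 0) (hD 0) (hcond 0 1 (by decide))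
  · exact false_of_eigen_component (hkern 1) (hμ01 1 · 1) (hμ01 1 · 0) (hab' 1) (hmass 1)
      (hq 1).1 (hq 1).2.1 (hq 1).2.2 hw₂ h₁ (fun t ht => (abs_le_nrm hw₁.1 ht).trans hwρ.1)
      (hγK 1) (fun j => hH_nonneg 1 j w hw) (fun j => (hH 1 j).trans_eq (add_comm _ _)) hμc
      (hρ 1) (fun t ht => (hEq t ht).2) (hγlt 1 0 1) (hγlt 1 1 1) (hD 1) (hcond 1 0 (by decide))

theorem stmt11
    (k : Fin 2 → ℝ → ℝ → ℝ) (g : Fin 2 → ℝ → ℝ) (f : Fin 2 → ℝ → ℝ → ℝ → ℝ)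
    (γ : Fin 2 → Fin 2 → ℝ → ℝ) (H : Fin 2 → Fin 2 → (ℝ → ℝ) → (ℝ → ℝ) → ℝ)
    (a b : Fin 2 → ℝ) (Φ : Fin 2 → ℝ → ℝ) (ct : Fin 2 → ℝ) (cγ : Fin 2 → Fin 2 → ℝ)
    (c : Fin 2 → ℝ) (K : Set ((ℝ → ℝ) × (ℝ → ℝ)))
    (hf_meas : ∀ i (x y : ℝ), Measurable (fun t => f i t x y))
    (hf_cont : ∀ i, ∀ᵐ t ∂(volume.restrict (Icc (0:ℝ) 1)),
      Continuous (fun p : ℝ × ℝ => f i t p.1 p.2))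
    (hf_nonneg : ∀ i t x y, 0 ≤ f i t x y)
    (hf_bdd : ∀ i, ∀ r > 0, ∃ C, ∀ᵐ t ∂(volume.restrict (Icc (0:ℝ) 1)),
      ∀ x ∈ Icc (-r) r, ∀ y ∈ Icc (-r) r, f i t x y ≤ C)
    (hk_meas : ∀ i, Measurable (Function.uncurry (k i)))
    (hk_cont : ∀ i, ∀ τ ∈ Icc (0:ℝ) 1, ∀ᵐ s ∂(volume.restrict (Icc (0:ℝ) 1)),
      Filter.Tendsto (fun t => |k i t s - k i τ s|) (nhdsWithin τ (Icc (0:ℝ) 1)) (nhds 0))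
    (hab : ∀ i, 0 ≤ a i ∧ a i ≤ b i ∧ b i ≤ 1)
    (hΦ_meas : ∀ i, Measurable (Φ i))
    (hΦ_bdd : ∀ i, ∃ C, ∀ᵐ s ∂(volume.restrict (Icc (0:ℝ) 1)), |Φ i s| ≤ C)
    (hct : ∀ i, ct i ∈ Ioc (0:ℝ) 1)
    (hkΦ_abs : ∀ i, ∀ t ∈ Icc (0:ℝ) 1, ∀ᵐ s ∂(volume.restrict (Icc (0:ℝ) 1)),
      |k i t s| ≤ Φ i s)
    (hkΦ_low : ∀ i, ∀ t ∈ Icc (a i) (b i), ∀ᵐ s ∂(volume.restrict (Icc (0:ℝ) 1)),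
      ct i * Φ i s ≤ k i t s)
    (hg_meas : ∀ i, Measurable (g i))
    (hg_nonneg : ∀ i, ∀ᵐ s ∂(volume.restrict (Icc (0:ℝ) 1)), 0 ≤ g i s)
    (hgΦ_int : ∀ i, IntegrableOn (fun s => g i s * Φ i s) (Icc (0:ℝ) 1))
    (hΦg_pos : ∀ i, 0 < ∫ s in (a i)..(b i), Φ i s * g i s)
    (hγ_cont : ∀ i j, ContinuousOn (γ i j) (Icc (0:ℝ) 1))
    (hcγ : ∀ i j, cγ i j ∈ Ioc (0:ℝ) 1)
    (hγ_low : ∀ i j, ∀ t ∈ Icc (a i) (b i), cγ i j * nrm (γ i j) ≤ γ i j t)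
    (hc : ∀ i, c i = min (ct i) (min (cγ i 0) (cγ i 1)))
    (hK : K = {w : (ℝ → ℝ) × (ℝ → ℝ) |
      (ContinuousOn w.1 (Icc (0:ℝ) 1) ∧ c 0 * nrm w.1 ≤ minOnIcc w.1 (a 0) (b 0)) ∧
      (ContinuousOn w.2 (Icc (0:ℝ) 1) ∧ c 1 * nrm w.2 ≤ minOnIcc w.2 (a 1) (b 1))})
    (hH_nonneg : ∀ i j, ∀ w ∈ K, 0 ≤ H i j w.1 w.2)
    (hH_cont : ∀ i j, ∀ w ∈ K, ∀ ε > 0, ∃ δ > 0, ∀ w' ∈ K,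
      max (nrm (fun t => w.1 t - w'.1 t)) (nrm (fun t => w.2 t - w'.2 t)) < δ →
      |H i j w.1 w.2 - H i j w'.1 w'.2| < ε)
    (hH_bdd : ∀ i j, ∀ M : ℝ, ∃ M', ∀ w ∈ K, max (nrm w.1) (nrm w.2) ≤ M → H i j w.1 w.2 ≤ M')
    (ρ : Fin 2 → ℝ) (hρ : ∀ i, 0 < ρ i) (hI1 : CondI1sys k g f γ H K ρ) :
    ∀ w ∈ K, ((nrm w.1 = ρ 0 ∧ nrm w.2 ≤ ρ 1) ∨ (nrm w.2 = ρ 1 ∧ nrm w.1 ≤ ρ 0)) →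
      ∀ μc : ℝ, 1 ≤ μc →
      ¬ (∀ t ∈ Icc (0:ℝ) 1, μc * w.1 t = Tsys k g f γ H 0 w.1 w.2 t ∧
        μc * w.2 t = Tsys k g f γ H 1 w.1 w.2 t) :=
  stmt11_general k g f γ H a b Φ ct cγ c K hf_meas hf_cont hf_nonneg hk_meas hab hΦ_meas hct hkΦ_abs
    hkΦ_low hg_meas hg_nonneg hgΦ_int hγ_cont hcγ hγ_low hc hK hH_nonneg ρ hρ hI1
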